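/- arXiv:1811.10378 — 2 statements merged into one kernel-verified Lean document; each statement's English description precedes it below -/
import Mathlib

section
/- Suppose the Sylvester tensor equation A *_M X + X *_N C = D has a solution X̂ of the form X̂ = Aᵀ *_M H + H *_N Cᵀ for some tensor H ∈ ℝ^{I₁×⋯×I_M×J₁×⋯×J_N}. Then X̂ is the unique least Frobenius-norm solution: for every solution X ≠ X̂ one has ‖X̂‖ < ‖X‖. -/
open scoped BigOperators

/-- Multi-index of shape `I₁ × ⋯ × I_M`. -/
abbrev MIdx {M : ℕ} (I : Fin M → ℕ) := (k : Fin M) → Fin (I k)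

/-- Einstein product: contraction over the shared (middle) index group. -/
def eprod {α β γ : Type*} [Fintype β] (A : α → β → ℝ) (B : β → γ → ℝ) :
    α → γ → ℝ := fun a c => ∑ b, A a b * B b c

/-- Generalized trace of a square tensor. -/
def ttrace {α : Type*} [Fintype α] (A : α → α → ℝ) : ℝ := ∑ a, A a a

/-- Transpose: swaps the two index groups. -/
def ttr {α β : Type*} (A : α → β → ℝ) : β → α → ℝ := fun b a => A a b

/-- Frobenius inner product ⟨X, Y⟩ = tr(Yᵀ * X). -/
noncomputable def frobInner {α β : Type*} [Fintype α] [Fintype β]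
    (X Y : α → β → ℝ) : ℝ := ttrace (eprod (ttr Y) X)

/-- Frobenius norm of a tensor. -/
noncomputable def tnorm {α β : Type*} [Fintype α] [Fintype β]
    (X : α → β → ℝ) : ℝ := Real.sqrt (frobInner X X)

/-- Kronecker product of tensors (blockwise). -/
def kron {α β γ δ : Type*} (A : α → β → ℝ) (B : γ → δ → ℝ) :
    α × γ → β × δ → ℝ := fun p q => A p.1 q.1 * B p.2 q.2

/-- Vec: lines up the row-group slices into a single column index. -/
def tVec {α β : Type*} (X : α → β → ℝ) : β × α → ℝ := fun p => X p.2 p.1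

/-- Einstein product of a tensor with a vectorized tensor. -/
def evec {α β : Type*} [Fintype β] (A : α → β → ℝ) (x : β → ℝ) : α → ℝ :=
  fun a => ∑ b, A a b * x b

/-- Identity tensor. -/
def idT {α : Type*} [DecidableEq α] : α → α → ℝ := fun a b => if a = b then 1 else 0

section Helpers
variable {α β γ : Type*} [Fintype α] [Fintype β]

lemma frobInner_eq (X Y : α → β → ℝ) :
    frobInner X Y = ∑ a, ∑ b, X a b * Y a b := by
  unfold frobInner ttrace eprod ttr
  rw [Finset.sum_comm]
  simp [mul_comm]

lemma frobInner_comm (X Y : α → β → ℝ) : frobInner X Y = frobInner Y X := by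
  simp [frobInner_eq, mul_comm]

lemma frobInner_add_left (X Y Z : α → β → ℝ) :
    frobInner (X + Y) Z = frobInner X Z + frobInner Y Z := by
  simp [frobInner_eq, Pi.add_apply, add_mul, Finset.sum_add_distrib]

lemma frobInner_add_right (X Y Z : α → β → ℝ) :
    frobInner X (Y + Z) = frobInner X Y + frobInner X Z := by
  simp [frobInner_eq, Pi.add_apply, mul_add, Finset.sum_add_distrib]

lemma frobInner_nonneg (X : α → β → ℝ) : 0 ≤ frobInner X X := by
  rw [frobInner_eq]
  exact Finset.sum_nonneg fun a _ => Finset.sum_nonneg fun b _ => mul_self_nonneg _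

lemma frobInner_pos (X : α → β → ℝ) (hX : X ≠ 0) : 0 < frobInner X X := by
  rcases Function.ne_iff.mp hX with ⟨a, ha⟩
  rcases Function.ne_iff.mp ha with ⟨b, hb⟩
  rw [frobInner_eq]
  exact Finset.sum_pos' (fun a _ => Finset.sum_nonneg fun b _ => mul_self_nonneg _)
    ⟨a, Finset.mem_univ a, Finset.sum_pos' (fun b _ => mul_self_nonneg _)
      ⟨b, Finset.mem_univ b, mul_self_pos.mpr hb⟩⟩

lemma adjoint_left (A : α → α → ℝ) (E H : α → β → ℝ) :
    frobInner (eprod A E) H = frobInner E (eprod (ttr A) H) := by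
  simp only [frobInner_eq, eprod, ttr]
  have h1 : (∑ a, ∑ b, (∑ c, A a c * E c b) * H a b)
      = ∑ a, ∑ c, ∑ b, A a c * E c b * H a b := by
    refine Finset.sum_congr rfl fun a _ => ?_
    rw [Finset.sum_comm]
    exact Finset.sum_congr rfl fun c _ => by rw [Finset.sum_mul]
  rw [h1, Finset.sum_comm]
  refine Finset.sum_congr rfl fun c _ => ?_
  rw [Finset.sum_comm]
  refine Finset.sum_congr rfl fun b _ => ?_
  rw [Finset.mul_sum]
  exact Finset.sum_congr rfl fun a _ => by ring

lemma adjoint_right (C : β → β → ℝ) (E : α → β → ℝ) (H : α → β → ℝ) :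
    frobInner (eprod E C) H = frobInner E (eprod H (ttr C)) := by
  simp only [frobInner_eq, eprod, ttr]
  refine Finset.sum_congr rfl fun a _ => ?_
  have h1 : (∑ b, (∑ c, E a c * C c b) * H a b)
      = ∑ b, ∑ c, E a c * C c b * H a b :=
    Finset.sum_congr rfl fun b _ => by rw [Finset.sum_mul]
  rw [h1, Finset.sum_comm]
  refine Finset.sum_congr rfl fun c _ => ?_
  rw [Finset.mul_sum]
  exact Finset.sum_congr rfl fun b _ => by ring

lemma eprod_sub_left (A : α → α → ℝ) (X Y : α → β → ℝ) :
    eprod A (X - Y) = eprod A X - eprod A Y := by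
  funext a b
  simp [eprod, mul_sub, Finset.sum_sub_distrib]

lemma eprod_sub_right (C : β → β → ℝ) (X Y : α → β → ℝ) :
    eprod (X - Y) C = eprod X C - eprod Y C := by
  funext a b
  simp [eprod, sub_mul, Finset.sum_sub_distrib]

end Helpers

theorem sylvester_least_norm_of_adjoint_range {M N : ℕ} (I : Fin M → ℕ) (J : Fin N → ℕ)
    (A : MIdx I → MIdx I → ℝ) (C : MIdx J → MIdx J → ℝ)
    (D Xh : MIdx I → MIdx J → ℝ)
    (hsol : eprod A Xh + eprod Xh C = D)
    (hform : ∃ H : MIdx I → MIdx J → ℝ, Xh = eprod (ttr A) H + eprod H (ttr C)) :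
    ∀ X : MIdx I → MIdx J → ℝ,
      eprod A X + eprod X C = D → X ≠ Xh → tnorm Xh < tnorm X := by
  rcases hform with ⟨H, hH⟩
  intro X hX hne
  set E := X - Xh with hE
  have hE0 : E ≠ 0 := fun h => hne (by
    have := sub_eq_zero.mp (by simpa [hE] using h); exact this)
  have hhom : eprod A E + eprod E C = 0 := by
    rw [hE, eprod_sub_left, eprod_sub_right]
    have h := hX.trans hsol.symm
    funext a b
    have h2 := congrFun (congrFun h a) b
    simp only [Pi.add_apply, Pi.sub_apply, Pi.zero_apply] at h2 ⊢
    linarith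
  have horth : frobInner E Xh = 0 := by
    rw [hH, frobInner_add_right, ← adjoint_left, ← adjoint_right,
      ← frobInner_add_left, hhom]
    simp [frobInner_eq]
  have hXdecomp : X = Xh + E := by rw [hE]; abel
  have key : frobInner X X = frobInner Xh Xh + frobInner E E := by
    have horth2 : frobInner Xh E = 0 := (frobInner_comm Xh E).trans horth
    rw [hXdecomp, frobInner_add_left, frobInner_add_right, frobInner_add_right,
      horth, horth2]
    ring
  have hlt : frobInner Xh Xh < frobInner X X := by
    rw [key]; linarith [frobInner_pos E hE0]
  exact Real.sqrt_lt_sqrt (frobInner_nonneg Xh) hlt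
end

section
/- If the Sylvester tensor equation A *_M X + X *_N C = D is consistent, then for any initial tensor X^(1), the iteration of Algorithm 3.1 (in exact arithmetic) produces a solution within at most mn + 1 steps, where m = I₁⋯I_M and n = J₁⋯J_N; i.e., there exists k ≤ mn + 1 with R^(k) = 0. -/
open scoped BigOperators

/-!
Algorithm 3.1 is Craig's method (conjugate gradients on the normal equations of the second kind)
for the operator `L X = A *_M X + X *_N C`, with `Lᵀ` its adjoint for the Frobenius inner product.
Given a solution `Xs`, induction on `k` shows that the residuals are pairwise orthogonal, that the
directions are pairwise orthogonal, and that `⟨Xs - X k, P k⟩ = ‖R k‖²`; the last identity keeps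
`P k ≠ 0`, so that no step divides by zero, as long as `R k ≠ 0`. Nonzero pairwise orthogonal
residuals are linearly independent, so at most `mn` of them occur.
-/

open LinearMap (BilinForm IsAdjointPair)
open LinearMap.BilinMap (toQuadraticMap_apply)
open scoped Matrix

section CGNE

variable {K V W : Type*} [Field K] [AddCommGroup V] [Module K V] [AddCommGroup W] [Module K W]

structure IsCGNEIteration (BV : BilinForm K V) (BW : BilinForm K W) (L : V →ₗ[K] W)
    (Lt : W →ₗ[K] V) (d : W) (x p : ℕ → V) (r : ℕ → W) : Prop where
  residual_eq : ∀ k, r k = d - L (x k)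
  direction_zero : p 0 = Lt (r 0)
  solution_succ : ∀ k, x (k + 1) = x k + (BW (r k) (r k) / BV (p k) (p k)) • p k
  direction_succ : ∀ k,
    p (k + 1) = Lt (r (k + 1)) + (BW (r (k + 1)) (r (k + 1)) / BW (r k) (r k)) • p k

structure CGNEOrthogonal (BV : BilinForm K V) (BW : BilinForm K W) (x p : ℕ → V) (r : ℕ → W)
    (xs : V) (n : ℕ) : Prop where
  error_direction : ∀ i ≤ n, BV (xs - x i) (p i) = BW (r i) (r i)
  residual : ∀ i j, i < j → j ≤ n → BW (r i) (r j) = 0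
  direction : ∀ i j, i < j → j ≤ n → BV (p i) (p j) = 0

variable {BV : BilinForm K V} {BW : BilinForm K W} {L : V →ₗ[K] W} {Lt : W →ₗ[K] V} {d : W}
  {x p : ℕ → V} {r : ℕ → W} {xs : V} {n : ℕ}

lemma CGNEOrthogonal.direction_self_ne_zero (hV : BV.toQuadraticMap.Anisotropic)
    (hn : CGNEOrthogonal BV BW x p r xs n) {i : ℕ} (hi : i ≤ n) (hr : BW (r i) (r i) ≠ 0) :
    BV (p i) (p i) ≠ 0 := by
  intro hp
  have hp0 : p i = 0 := hV _ (by rwa [toQuadraticMap_apply])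
  rw [← hn.error_direction i hi, hp0, map_zero] at hr
  exact hr rfl

namespace IsCGNEIteration

lemma residual_succ (h : IsCGNEIteration BV BW L Lt d x p r) (k : ℕ) :
    r (k + 1) = r k - (BW (r k) (r k) / BV (p k) (p k)) • L (p k) := by
  rw [h.residual_eq (k + 1), h.solution_succ, map_add, map_smul, sub_add_eq_sub_sub,
    ← h.residual_eq]

lemma step_smul_apply_direction (h : IsCGNEIteration BV BW L Lt d x p r) (k : ℕ) :
    (BW (r k) (r k) / BV (p k) (p k)) • L (p k) = r k - r (k + 1) := by
  rw [h.residual_succ]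
  abel

lemma error_succ (h : IsCGNEIteration BV BW L Lt d x p r) (xs : V) (k : ℕ) :
    xs - x (k + 1) = xs - x k - (BW (r k) (r k) / BV (p k) (p k)) • p k := by
  rw [h.solution_succ]
  abel

lemma adjoint_residual_succ (h : IsCGNEIteration BV BW L Lt d x p r) (k : ℕ) :
    Lt (r (k + 1)) = p (k + 1) - (BW (r (k + 1)) (r (k + 1)) / BW (r k) (r k)) • p k := by
  rw [h.direction_succ]
  abel

lemma error_adjoint_residual (h : IsCGNEIteration BV BW L Lt d x p r)
    (hadj : IsAdjointPair BV BW L Lt) (hxs : L xs = d) (k : ℕ) :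
    BV (xs - x k) (Lt (r k)) = BW (r k) (r k) := by
  rw [← hadj, map_sub, hxs, ← h.residual_eq]

lemma adjoint_residual_direction (h : IsCGNEIteration BV BW L Lt d x p r)
    (hn : CGNEOrthogonal BV BW x p r xs n) {i j : ℕ} (hij : i ≤ j) (hj : j ≤ n) :
    BV (Lt (r i)) (p j) = BV (p i) (p j) := by
  cases i with
  | zero => rw [h.direction_zero]
  | succ i =>
    simp only [h.adjoint_residual_succ, map_sub, map_smul, LinearMap.sub_apply,
      LinearMap.smul_apply, hn.direction i j (by omega) hj, smul_zero, sub_zero]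

lemma error_direction_succ (h : IsCGNEIteration BV BW L Lt d x p r)
    (hadj : IsAdjointPair BV BW L Lt) (hxs : L xs = d)
    (hn : BV (xs - x n) (p n) = BW (r n) (r n)) (hp : BV (p n) (p n) ≠ 0) :
    BV (xs - x (n + 1)) (p (n + 1)) = BW (r (n + 1)) (r (n + 1)) := by
  have herr : BV (xs - x (n + 1)) (p n) = 0 := by
    rw [h.error_succ, map_sub, map_smul, LinearMap.sub_apply, LinearMap.smul_apply, hn,
      smul_eq_mul, div_mul_cancel₀ _ hp, sub_self]
  rw [h.direction_succ, map_add, map_smul, herr, smul_zero, add_zero,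
    h.error_adjoint_residual hadj hxs]

lemma residual_orthogonal_succ (h : IsCGNEIteration BV BW L Lt d x p r)
    (hadj : IsAdjointPair BV BW L Lt) (hVs : BV.IsSymm) (hWs : BW.IsSymm)
    (hn : CGNEOrthogonal BV BW x p r xs n) (hp : BV (p n) (p n) ≠ 0) {i : ℕ} (hi : i ≤ n) :
    BW (r i) (r (n + 1)) = 0 := by
  have hLp : BW (r i) (L (p n)) = BV (p i) (p n) := by
    rw [hWs.eq, hadj, hVs.eq, h.adjoint_residual_direction hn hi le_rfl]
  rw [h.residual_succ, map_sub, map_smul, hLp, smul_eq_mul]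
  rcases hi.lt_or_eq with hi | rfl
  · rw [hn.residual i n hi le_rfl, hn.direction i n hi le_rfl, mul_zero, sub_zero]
  · rw [div_mul_cancel₀ _ hp, sub_self]

lemma direction_orthogonal_succ (h : IsCGNEIteration BV BW L Lt d x p r)
    (hadj : IsAdjointPair BV BW L Lt) (hn : CGNEOrthogonal BV BW x p r xs n)
    (hr : ∀ i ≤ n, BW (r i) (r i) ≠ 0) (hp : ∀ i ≤ n, BV (p i) (p i) ≠ 0)
    (hres : ∀ i ≤ n, BW (r i) (r (n + 1)) = 0) {i : ℕ} (hi : i ≤ n) :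
    BV (p i) (p (n + 1)) = 0 := by
  have hstep : BW (r i) (r i) / BV (p i) (p i) * BW (L (p i)) (r (n + 1))
      = BW (r i) (r (n + 1)) - BW (r (i + 1)) (r (n + 1)) := by
    rw [← smul_eq_mul, ← LinearMap.smul_apply, ← map_smul, h.step_smul_apply_direction,
      map_sub, LinearMap.sub_apply]
  rw [hres i hi] at hstep
  rw [h.direction_succ, map_add, map_smul, ← hadj, smul_eq_mul]
  rcases hi.lt_or_eq with hi | rfl
  · rw [hres (i + 1) hi, sub_zero, mul_eq_zero] at hstep
    rw [hstep.resolve_left (div_ne_zero (hr i hi.le) (hp i hi.le)),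
      hn.direction i n hi le_rfl, mul_zero, add_zero]
  · field_simp [hr i le_rfl, hp i le_rfl] at hstep ⊢
    linear_combination hstep

lemma cgneOrthogonal_succ (h : IsCGNEIteration BV BW L Lt d x p r)
    (hadj : IsAdjointPair BV BW L Lt) (hVs : BV.IsSymm) (hWs : BW.IsSymm)
    (hV : BV.toQuadraticMap.Anisotropic) (hxs : L xs = d)
    (hn : CGNEOrthogonal BV BW x p r xs n) (hr : ∀ i ≤ n, BW (r i) (r i) ≠ 0) :
    CGNEOrthogonal BV BW x p r xs (n + 1) := by
  have hp i (hi : i ≤ n) := hn.direction_self_ne_zero hV hi (hr i hi)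
  have hres i (hi : i ≤ n) := h.residual_orthogonal_succ hadj hVs hWs hn (hp n le_rfl) hi
  refine ⟨fun i hi => ?_, fun i j hij hj => ?_, fun i j hij hj => ?_⟩
  · rcases Nat.le_succ_iff.mp hi with hi | rfl
    · exact hn.error_direction i hi
    · exact h.error_direction_succ hadj hxs (hn.error_direction n le_rfl) (hp n le_rfl)
  · rcases Nat.le_succ_iff.mp hj with hj | rfl
    · exact hn.residual i j hij hj
    · exact hres i (by omega)
  · rcases Nat.le_succ_iff.mp hj with hj | rfl
    · exact hn.direction i j hij hj
    · exact h.direction_orthogonal_succ hadj hn hr hp hres (by omega)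

lemma cgneOrthogonal (h : IsCGNEIteration BV BW L Lt d x p r)
    (hadj : IsAdjointPair BV BW L Lt) (hVs : BV.IsSymm) (hWs : BW.IsSymm)
    (hV : BV.toQuadraticMap.Anisotropic) (hxs : L xs = d) :
    ∀ n, (∀ i < n, BW (r i) (r i) ≠ 0) → CGNEOrthogonal BV BW x p r xs n
  | 0, _ => ⟨fun i hi => by
      rw [Nat.le_zero.mp hi, h.direction_zero, h.error_adjoint_residual hadj hxs],
      fun _ _ _ _ => by omega, fun _ _ _ _ => by omega⟩
  | n + 1, hr => h.cgneOrthogonal_succ hadj hVs hWs hV hxs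
      (h.cgneOrthogonal hadj hVs hWs hV hxs n fun i hi => hr i (by omega))
      fun i hi => hr i (by omega)

theorem exists_residual_eq_zero [FiniteDimensional K W] (h : IsCGNEIteration BV BW L Lt d x p r)
    (hadj : IsAdjointPair BV BW L Lt) (hVs : BV.IsSymm) (hWs : BW.IsSymm)
    (hV : BV.toQuadraticMap.Anisotropic) (hW : BW.toQuadraticMap.Anisotropic)
    (hxs : L xs = d) : ∃ k ≤ Module.finrank K W, r k = 0 := by
  by_contra! hr
  have hr' : ∀ k ≤ Module.finrank K W, BW (r k) (r k) ≠ 0 := fun k hk h0 =>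
    hr k hk (hW _ (by rwa [toQuadraticMap_apply]))
  have horth := h.cgneOrthogonal hadj hVs hWs hV hxs (Module.finrank K W + 1)
    fun k hk => hr' k (by omega)
  have hli : LinearIndependent K fun k : Fin (Module.finrank K W + 1) => r k := by
    refine LinearMap.BilinForm.linearIndependent_of_iIsOrtho (fun i j hij => ?_)
      fun k => hr' k (by omega)
    change BW (r i) (r j) = 0
    rcases lt_or_gt_of_ne (Fin.val_injective.ne hij) with hlt | hlt
    · exact horth.residual i j hlt (by omega)
    · rw [hWs.eq]
      exact horth.residual j i hlt (by omega)
  simpa using hli.fintype_card_le_finrank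

end IsCGNEIteration

end CGNE

section Frobenius
variable {α β : Type*}

lemma of_ttr (X : α → β → ℝ) : Matrix.of (ttr X) = (Matrix.of X)ᵀ := rfl

lemma of_eprod {γ : Type*} [Fintype β] (X : α → β → ℝ) (Y : β → γ → ℝ) :
    Matrix.of (eprod X Y) = Matrix.of X * Matrix.of Y := rfl

variable [Fintype α] [Fintype β]

lemma frobInner_eq_trace (X Y : α → β → ℝ) :
    frobInner X Y = ((Matrix.of Y)ᵀ * Matrix.of X).trace := rfl

lemma frobInner_eprod_left (A : α → α → ℝ) (X Y : α → β → ℝ) :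
    frobInner (eprod A X) Y = frobInner X (eprod (ttr A) Y) := by
  simp only [frobInner_eq_trace, of_eprod, of_ttr, Matrix.transpose_mul, Matrix.transpose_transpose,
    Matrix.mul_assoc]

lemma frobInner_eprod_right (C : β → β → ℝ) (X Y : α → β → ℝ) :
    frobInner (eprod X C) Y = frobInner X (eprod Y (ttr C)) := by
  simp only [frobInner_eq_trace, of_eprod, of_ttr, Matrix.transpose_mul,
    Matrix.transpose_transpose]
  rw [← Matrix.mul_assoc, Matrix.trace_mul_comm, Matrix.mul_assoc]

noncomputable def frobForm : BilinForm ℝ (α → β → ℝ) :=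
  LinearMap.mk₂ ℝ frobInner
    (fun _ _ _ => by
      simp only [frobInner_eq_trace, ← Matrix.of_add_of, Matrix.mul_add, Matrix.trace_add])
    (fun _ _ _ => by
      simp only [frobInner_eq_trace, ← Matrix.smul_of, Matrix.mul_smul, Matrix.trace_smul])
    (fun _ _ _ => by
      simp only [frobInner_eq_trace, ← Matrix.of_add_of, Matrix.transpose_add, Matrix.add_mul,
        Matrix.trace_add])
    (fun _ _ _ => by
      simp only [frobInner_eq_trace, ← Matrix.smul_of, Matrix.transpose_smul, Matrix.smul_mul,
        Matrix.trace_smul])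

lemma frobForm_isSymm : (frobForm : BilinForm ℝ (α → β → ℝ)).IsSymm :=
  ⟨fun X Y => show frobInner X Y = frobInner Y X by
    rw [frobInner_eq_trace, frobInner_eq_trace, ← Matrix.trace_transpose, Matrix.transpose_mul,
      Matrix.transpose_transpose]⟩

lemma frobForm_anisotropic : (frobForm : BilinForm ℝ (α → β → ℝ)).toQuadraticMap.Anisotropic :=
  fun _ hX => Matrix.of.injective (Matrix.trace_conjTranspose_mul_self_eq_zero_iff.mp hX)

def sylvesterMap (A : α → α → ℝ) (C : β → β → ℝ) : (α → β → ℝ) →ₗ[ℝ] (α → β → ℝ) where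
  toFun X := eprod A X + eprod X C
  map_add' X Y := Matrix.of.injective <| by
    simp only [← Matrix.of_add_of, of_eprod, Matrix.mul_add, Matrix.add_mul]
    abel
  map_smul' c X := Matrix.of.injective <| by
    simp only [← Matrix.of_add_of, ← Matrix.smul_of, of_eprod, Matrix.mul_smul, Matrix.smul_mul,
      RingHom.id_apply, smul_add]

lemma isAdjointPair_sylvesterMap (A : α → α → ℝ) (C : β → β → ℝ) :
    IsAdjointPair frobForm frobForm (sylvesterMap A C) (sylvesterMap (ttr A) (ttr C)) := by
  intro X Y
  change frobForm (eprod A X + eprod X C) Y = frobForm X (eprod (ttr A) Y + eprod Y (ttr C))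
  rw [map_add, map_add, LinearMap.add_apply]
  exact congrArg₂ (· + ·) (frobInner_eprod_left A X Y) (frobInner_eprod_right C X Y)

end Frobenius

theorem algorithm_finite_termination {M N : ℕ} (I : Fin M → ℕ) (J : Fin N → ℕ)
(A : MIdx I → MIdx I → ℝ) (C : MIdx J → MIdx J → ℝ)
    (D : MIdx I → MIdx J → ℝ)
    (X R P : ℕ → MIdx I → MIdx J → ℝ)
    (hR : ∀ k, 1 ≤ k → R k = D - (eprod A (X k) + eprod (X k) C))
    (hP1 : P 1 = eprod (ttr A) (R 1) + eprod (R 1) (ttr C))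
    (hX : ∀ k, 1 ≤ k →
      X (k + 1) = X k + (frobInner (R k) (R k) / frobInner (P k) (P k)) • P k)
    (hP : ∀ k, 1 ≤ k →
      P (k + 1) = eprod (ttr A) (R (k + 1)) + eprod (R (k + 1)) (ttr C)
        + (frobInner (R (k + 1)) (R (k + 1)) / frobInner (R k) (R k)) • P k)
    (hcons : ∃ Xs : MIdx I → MIdx J → ℝ, eprod A Xs + eprod Xs C = D) :
    ∃ k, 1 ≤ k ∧ k ≤ (∏ i, I i) * (∏ j, J j) + 1 ∧ R k = 0 := by
  obtain ⟨Xs, hXs⟩ := hcons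
  have hcg : IsCGNEIteration frobForm frobForm (sylvesterMap A C) (sylvesterMap (ttr A) (ttr C))
      D (fun k => X (k + 1)) (fun k => P (k + 1)) (fun k => R (k + 1)) :=
    ⟨fun k => hR (k + 1) k.succ_pos, hP1, fun k => hX (k + 1) k.succ_pos,
      fun k => hP (k + 1) k.succ_pos⟩
  have hdim : Module.finrank ℝ (MIdx I → MIdx J → ℝ) = (∏ i, I i) * ∏ j, J j := by
    simp [Module.finrank_pi_fintype, Fintype.card_pi]
  obtain ⟨k, hk, hRk⟩ := hcg.exists_residual_eq_zero (isAdjointPair_sylvesterMap A C)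
    frobForm_isSymm frobForm_isSymm frobForm_anisotropic frobForm_anisotropic hXs
  exact ⟨k + 1, k.succ_pos, by omega, hRk⟩
end
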